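/- arXiv:0808.2798 — 5 statements merged into one kernel-verified Lean document; each statement's English description precedes it below -/
import Mathlib

section
/- Suppose (I', δ') is the right Kan extension of G' ∘ I'' along F', and (H, δ) is the right Kan extension of G ∘ I' along F. If G is a right adjoint, then (H, Gδ' ∘ δ_{F'}) is the right Kan extension of G ∘ G' ∘ I'' along F ∘ F'. -/
/-!
A transformation `α : L ⋙ F' ⟶ F` exhibits `F'` as a right Kan extension exactly when
`β ↦ L β ≫ α` is a bijection `(G ⟶ F') ≃ (L ⋙ G ⟶ F)` for every `G`. In this form pasting is a
composite of two such bijections, and a right adjoint `G` with left adjoint `Gᴸ` preserves right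
Kan extensions because whiskering the adjunction gives `(M ⟶ I ⋙ G) ≃ (M ⋙ Gᴸ ⟶ I)` naturally
in `M`. The theorem pastes `Gδ'`, a right Kan extension of `G ∘ G' ∘ I''` along `F'`, with `δ`.
-/

open CategoryTheory

namespace CategoryTheory.Functor

variable {C D E H K : Type*} [Category C] [Category D] [Category E] [Category H] [Category K]

lemma isRightKanExtension_iff_bijective {L : C ⥤ D} {F : C ⥤ H} (F' : D ⥤ H)
    (α : L ⋙ F' ⟶ F) :
    F'.IsRightKanExtension α ↔
      ∀ G : D ⥤ H, Function.Bijective fun β : G ⟶ F' => whiskerLeft L β ≫ α := by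
  refine ⟨fun _ G => (homEquivOfIsRightKanExtension F' α G).bijective, fun h => ?_⟩
  refine ⟨⟨Limits.IsTerminal.ofUniqueHom
    (fun g => CostructuredArrow.homMk ((h g.left).2 g.hom).choose ((h g.left).2 g.hom).choose_spec)
    fun g η => ?_⟩⟩
  ext1
  exact (h g.left).1 ((CostructuredArrow.w η).trans ((h g.left).2 g.hom).choose_spec.symm)

lemma isRightKanExtension_paste {L₁ : C ⥤ D} {L₂ : D ⥤ E} {M : D ⥤ H} {N : E ⥤ H}
    {J : C ⥤ H} (μ : L₁ ⋙ M ⟶ J) (δ : L₂ ⋙ N ⟶ M)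
    [M.IsRightKanExtension μ] [N.IsRightKanExtension δ] :
    N.IsRightKanExtension
      ((associator L₁ L₂ N).hom ≫ whiskerLeft L₁ δ ≫ μ : (L₁ ⋙ L₂) ⋙ N ⟶ J) := by
  rw [isRightKanExtension_iff_bijective]
  intro G
  have hcomp : (fun β : G ⟶ N =>
      whiskerLeft (L₁ ⋙ L₂) β ≫ (associator L₁ L₂ N).hom ≫ whiskerLeft L₁ δ ≫ μ) =
      (fun γ : L₂ ⋙ G ⟶ M => whiskerLeft L₁ γ ≫ μ) ∘ fun β : G ⟶ N => whiskerLeft L₂ β ≫ δ := by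
    ext β : 1
    ext X
    simp
  rw [hcomp]
  exact ((isRightKanExtension_iff_bijective M μ).1 inferInstance _).comp
    ((isRightKanExtension_iff_bijective N δ).1 inferInstance G)

lemma isRightKanExtension_comp_of_isRightAdjoint {L : C ⥤ D} {J : C ⥤ H} {I : D ⥤ H}
    (δ : L ⋙ I ⟶ J) [I.IsRightKanExtension δ] (G : H ⥤ K) [G.IsRightAdjoint] :
    (I ⋙ G).IsRightKanExtension ((associator L I G).inv ≫ whiskerRight δ G) := by
  rw [isRightKanExtension_iff_bijective]
  intro M
  let adj := Adjunction.ofIsRightAdjoint G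
  let eD := (adj.whiskerRight D).homEquiv M I
  let eC := (adj.whiskerRight C).homEquiv (L ⋙ M) J
  have hcomp : (fun β : M ⟶ I ⋙ G =>
      whiskerLeft L β ≫ (associator L I G).inv ≫ whiskerRight δ G) =
      eC ∘ (fun γ : M ⋙ G.leftAdjoint ⟶ I => whiskerLeft L γ ≫ δ) ∘ eD.symm := by
    ext β : 1
    obtain ⟨γ, rfl⟩ := eD.surjective β
    simp only [Function.comp_apply, Equiv.symm_apply_apply]
    simp only [eC, eD, Adjunction.homEquiv_unit]
    ext X
    simp
  rw [hcomp]
  exact eC.bijective.comp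
    (((isRightKanExtension_iff_bijective I δ).1 inferInstance _).comp eD.symm.bijective)

end CategoryTheory.Functor

/-- If `(I', δ')` is the right Kan extension of `G' ∘ I''` along `F'`, `(H, δ)` is the right
Kan extension of `G ∘ I'` along `F`, and `G` is a right adjoint, then `H` together with the
composite transformation `Gδ' ∘ δ_{F'}` is the right Kan extension of `G ∘ G' ∘ I''` along
`F ∘ F'`. -/
theorem stmt1 {A A' A'' B B' B'' : Type*}
    [Category A] [Category A'] [Category A''] [Category B] [Category B'] [Category B'']
    (F : A' ⥤ A) (F' : A'' ⥤ A') (I' : A' ⥤ B') (I'' : A'' ⥤ B'')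
    (G : B' ⥤ B) (G' : B'' ⥤ B') (H : A ⥤ B)
    (δ' : F' ⋙ I' ⟶ I'' ⋙ G') (δ : F ⋙ H ⟶ I' ⋙ G)
    [I'.IsRightKanExtension δ'] [H.IsRightKanExtension δ] [G.IsRightAdjoint] :
    H.IsRightKanExtension
      ((Functor.associator F' F H).hom ≫ Functor.whiskerLeft F' δ ≫
        (Functor.associator F' I' G).inv ≫ Functor.whiskerRight δ' G ≫
        (Functor.associator I'' G' G).hom :
        (F' ⋙ F) ⋙ H ⟶ I'' ⋙ (G' ⋙ G)) := by
  have hGδ' := Functor.isRightKanExtension_comp_of_isRightAdjoint δ' G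
  have hGδ'_assoc : (I' ⋙ G).IsRightKanExtension
      ((Functor.associator F' I' G).inv ≫ Functor.whiskerRight δ' G ≫
        (Functor.associator I'' G' G).hom : F' ⋙ (I' ⋙ G) ⟶ I'' ⋙ (G' ⋙ G)) :=
    Functor.isRightKanExtension_of_iso (Iso.refl _)
      ((Functor.associator F' I' G).inv ≫ Functor.whiskerRight δ' G) _ (by ext; simp)
  exact Functor.isRightKanExtension_paste _ δ
end

section
/- Let A be an object of a category C. The functor from the category of epimorphisms onto A (morphisms f : B ⟶ A, with morphisms over A) to the comma category (A ↓ cod), sending f to (f, 1_A), is initial, provided pullbacks of such epimorphisms along arbitrary maps exist and remain in the class. -/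
open CategoryTheory CategoryTheory.Limits

variable {C : Type*} [Category C]

/-- The category of extensions in `C`: arrows belonging to a class `E` of morphisms. -/
def ExtCat (E : MorphismProperty C) : Type _ :=
  CategoryTheory.ObjectProperty.FullSubcategory (fun f : Arrow C => E f.hom)

instance (E : MorphismProperty C) : Category (ExtCat E) :=
  ObjectProperty.FullSubcategory.category _

/-- The codomain functor from the category of extensions to `C`. -/
def codF (E : MorphismProperty C) : ExtCat E ⥤ C :=
  ObjectProperty.ι _ ⋙ Arrow.rightFunc

/-- The category of extensions of a fixed object `A`: morphisms `f : B ⟶ A` in the class `E`,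
with morphisms over `A`. -/
def ExtOver (E : MorphismProperty C) (A : C) : Type _ :=
  CategoryTheory.ObjectProperty.FullSubcategory (fun f : Over A => E f.hom)

instance (E : MorphismProperty C) (A : C) : Category (ExtOver E A) :=
  ObjectProperty.FullSubcategory.category _

/-- An extension of `A`, viewed as an object of the category of extensions. -/
def toExt {E : MorphismProperty C} {A : C} (f : ExtOver E A) : ExtCat E :=
  ⟨Arrow.mk f.obj.hom, f.property⟩

/-- A morphism of extensions of `A`, viewed as a morphism in the category of extensions
whose codomain component is the identity of `A`. -/
def toExtMap {E : MorphismProperty C} {A : C} {f g : ExtOver E A} (u : f ⟶ g) :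
    toExt f ⟶ toExt g :=
  ObjectProperty.homMk (Arrow.homMk (u := u.hom.left) (v := 𝟙 A)
    (by show u.hom.left ≫ g.obj.hom = f.obj.hom ≫ 𝟙 A
        exact (Over.w (u.hom : f.obj ⟶ g.obj)).trans (Category.comp_id _).symm))

theorem toExtMap_id {E : MorphismProperty C} {A : C} (f : ExtOver E A) :
    toExtMap (𝟙 f) = 𝟙 (toExt f) := by
  apply ObjectProperty.hom_ext
  apply CommaMorphism.ext <;> rfl

theorem toExtMap_comp {E : MorphismProperty C} {A : C} {f g h : ExtOver E A}
    (u : f ⟶ g) (v : g ⟶ h) :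
    toExtMap (u ≫ v) = toExtMap u ≫ toExtMap v := by
  apply ObjectProperty.hom_ext
  apply CommaMorphism.ext
  · rfl
  · exact (Category.id_comp _).symm

/-- The functor sending an extension `f : B ⟶ A` of `A` to the pair `(f, 1_A)` in the
comma category `(A ↓ cod)`. -/
def extOverToComma (E : MorphismProperty C) (A : C) :
    ExtOver E A ⥤ StructuredArrow A (codF E) where
  obj f := StructuredArrow.mk (show A ⟶ (codF E).obj (toExt f) from 𝟙 A)
  map u := StructuredArrow.homMk (toExtMap u)
    (show 𝟙 A ≫ (codF E).map (toExtMap u) = 𝟙 A by simp [codF, toExtMap]; exact Category.id_comp _)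
  map_id f := by
    apply CommaMorphism.ext
    · rfl
    · exact toExtMap_id f
  map_comp u v := by
    apply CommaMorphism.ext
    · rfl
    · exact toExtMap_comp u v

/-!
Given an object `(f : B ⟶ D, g : A ⟶ D)` of `(A ↓ cod)`, the pullback `g*f : B ×_D A ⟶ A` of
`f` along `g` is again an extension, and the square of the pullback is a map
`(g*f, 1_A) ⟶ (f, g)` in `(A ↓ cod)`. The universal property of the pullback says precisely that
this map is terminal among maps from the image of the functor to `(f, g)`; a category with a
terminal object is connected, so the functor is initial.
-/

namespace ExtOver

variable {E : MorphismProperty C} {A : C}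

lemma hom_right_right_of_costructuredArrow {d : StructuredArrow A (codF E)}
    (Y : CostructuredArrow (extOverToComma E A) d) : Y.hom.right.hom.right = d.hom := by
  have := Y.hom.w
  simp only [codF, extOverToComma] at this
  exact (Category.id_comp _).symm.trans this

lemma hom_right_comm {d : StructuredArrow A (codF E)}
    (Y : CostructuredArrow (extOverToComma E A) d) :
    Y.hom.right.hom.left ≫ d.right.obj.hom = Y.left.obj.hom ≫ d.hom := by
  rw [← hom_right_right_of_costructuredArrow Y]
  exact Y.hom.right.hom.w

variable [HasPullbacks C] [E.IsStableUnderBaseChange] (d : StructuredArrow A (codF E))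

noncomputable def pullbackOfComma : ExtOver E A :=
  ⟨Over.mk (pullback.snd d.right.obj.hom d.hom),
    E.of_isPullback (IsPullback.of_hasPullback _ _) d.right.property⟩

noncomputable def pullbackOfCommaHom : toExt (pullbackOfComma d) ⟶ d.right :=
  ObjectProperty.homMk (Arrow.homMk (u := pullback.fst _ _) (v := d.hom) pullback.condition)

noncomputable def pullbackOfCommaCostructuredArrow :
    CostructuredArrow (extOverToComma E A) d :=
  CostructuredArrow.mk (StructuredArrow.homMk (pullbackOfCommaHom d) (Category.id_comp _))

variable {d}

noncomputable def liftToPullbackOfComma (Y : CostructuredArrow (extOverToComma E A) d) :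
    Y.left ⟶ pullbackOfComma d :=
  ObjectProperty.homMk (Over.homMk (pullback.lift _ _ (hom_right_comm Y)) (pullback.lift_snd _ _ _))

lemma liftToPullbackOfComma_fac (Y : CostructuredArrow (extOverToComma E A) d) :
    (extOverToComma E A).map (liftToPullbackOfComma Y) ≫ (pullbackOfCommaCostructuredArrow d).hom
      = Y.hom := by
  ext
  apply ObjectProperty.hom_ext
  apply Arrow.hom_ext
  · exact pullback.lift_fst _ _ _
  · exact (Category.id_comp _).trans (hom_right_right_of_costructuredArrow Y).symm

lemma hom_left_fst {Y : CostructuredArrow (extOverToComma E A) d}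
    (m : Y ⟶ pullbackOfCommaCostructuredArrow d) :
    m.left.hom.left ≫ pullback.fst _ _ = Y.hom.right.hom.left :=
  congrArg (fun u => u.right.hom.left) (CostructuredArrow.w m)

lemma hom_ext_pullbackOfComma {Y : CostructuredArrow (extOverToComma E A) d}
    (m m' : Y ⟶ pullbackOfCommaCostructuredArrow d) : m = m' := by
  ext
  apply ObjectProperty.hom_ext
  apply Over.OverMorphism.ext
  apply pullback.hom_ext
  · exact (hom_left_fst m).trans (hom_left_fst m').symm
  · exact (Over.w m.left.hom).trans (Over.w m'.left.hom).symm

variable (d) in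
noncomputable def isTerminalPullbackOfCommaCostructuredArrow :
    IsTerminal (pullbackOfCommaCostructuredArrow d) :=
  IsTerminal.ofUniqueHom
    (fun Y => CostructuredArrow.homMk (liftToPullbackOfComma Y) (liftToPullbackOfComma_fac Y))
    (fun _ _ => hom_ext_pullbackOfComma _ _)

end ExtOver

theorem stmt3_general (E : MorphismProperty C) (A : C) [HasPullbacks C]
    (hE : E.IsStableUnderBaseChange) :
    (extOverToComma E A).Initial := by
  have := hE
  exact ⟨fun d =>
    isConnected_of_isTerminal _ (ExtOver.isTerminalPullbackOfCommaCostructuredArrow d)⟩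

/-- If the class of extensions consists of epimorphisms and is stable under base change
(and the relevant pullbacks exist), then the functor from extensions of `A` to the comma
category `(A ↓ cod)` is initial. -/
theorem stmt3 (E : MorphismProperty C) (A : C) [HasPullbacks C]
    (hepi : ∀ ⦃X Y : C⦄ (f : X ⟶ Y), E f → Epi f)
    (hE : E.IsStableUnderBaseChange) :
    (extOverToComma E A).Initial :=
  stmt3_general E A hE
end

section
/- If the identity 1_A is a weakly initial object in the category of extensions of A (i.e., every extension f : B ⟶ A admits a section), then the limit of the functor sending an extension f of A to the kernel of its centralisation I₁f is the zero object. -/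
open CategoryTheory CategoryTheory.Limits

/-- Let `J` be the category of extensions of `A` and `t` the object `1_A`. If `t` is weakly
initial (every extension of `A` is split, i.e. admits a morphism from `1_A`) and the value
at `t` of the functor `K` sending an extension `f` to the kernel of its centralisation
`I₁ f` is zero (indeed `K[I₁(1_A)] = 0`), then the limit of `K` is the zero object. -/
theorem stmt5 {J C : Type*} [Category J] [Category C] [HasZeroMorphisms C]
    (K : J ⥤ C) (t : J) (ht : ∀ j : J, Nonempty (t ⟶ j)) (hKt : IsZero (K.obj t))
    [HasLimit K] :
    IsZero (limit K) := by
  rw [IsZero.iff_id_eq_zero]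
  apply limit.hom_ext
  intro j
  obtain ⟨u⟩ := ht j
  have : limit.π K j = limit.π K t ≫ K.map u := by simp
  rw [this]
  simp [hKt.eq_zero_of_tgt (limit.π K t)]
end

section
/- The only element of nℤ fixed by multiplication by nk + 1 for all k ∈ ℤ (with n ≥ 1) is 0. Consequently the limit of the diagram with single object nℤ and maps given by multiplication by nk+1 for all k ∈ ℤ is the zero group; in particular the second integral homology of the cyclic group C_n vanishes: H₂(C_n, ℤ) = 0. -/
/-!
If `n ∣ x` and `(n + 1) x = x`, then `n x = 0`, and writing `x = n m` gives `x * x = (n x) m = 0`.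

For `H₂`, let `R` be the kernel of `F = FreeGroup G → G`. Then `F ⧸ ⁅R, F⁆` is a central
extension of the cyclic group `G` by the image of `R`, hence abelian. So `⁅F, F⁆ ≤ ⁅R, F⁆`
and the Hopf quotient `(⁅F, F⁆ ⊓ R) ⧸ ⁅R, F⁆` is trivial.
-/

open Subgroup

/-- Kernel of the canonical free presentation `FreeGroup G ⟶ G`. -/
def presentationKer (G : Type*) [Group G] : Subgroup (FreeGroup G) :=
  (FreeGroup.lift (id : G → G)).ker

instance presentationKer_normal (G : Type*) [Group G] : (presentationKer G).Normal :=
  MonoidHom.normal_ker _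

/-- The second integral homology (Schur multiplier) `H₂(G, ℤ)` of a group `G`, defined via
the Hopf formula `([F,F] ⊓ R) / [R,F]` for the canonical free presentation
`F = FreeGroup G ⟶ G` with kernel `R`. -/
def hopfH2 (G : Type*) [Group G] : Type _ :=
  ↥(commutator (FreeGroup G) ⊓ presentationKer G) ⧸
    ((⁅presentationKer G, (⊤ : Subgroup (FreeGroup G))⁆).subgroupOf
      (commutator (FreeGroup G) ⊓ presentationKer G))

noncomputable instance (G : Type*) [Group G] : Group (hopfH2 G) := by
  unfold hopfH2; infer_instance

theorem eq_zero_of_dvd_of_mul_eq_zero {M : Type*} [CommMonoidWithZero M] [NoZeroDivisors M]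
    {n x : M} (hdvd : n ∣ x) (hnx : n * x = 0) : x = 0 := by
  obtain ⟨m, rfl⟩ := hdvd
  exact mul_self_eq_zero.mp <| by rw [mul_right_comm, hnx, zero_mul]

theorem Int.eq_zero_of_dvd_of_forall_mul_add_one_mul_eq {n x : ℤ} (hdvd : n ∣ x)
    (hfix : ∀ k : ℤ, (n * k + 1) * x = x) : x = 0 :=
  eq_zero_of_dvd_of_mul_eq_zero hdvd <| by linarith [hfix 1]

namespace Subgroup

variable {F : Type*} [Group F]

theorem map_mk'_le_center_quotient_commutator_top (R : Subgroup F) [R.Normal] :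
    R.map (QuotientGroup.mk' ⁅R, ⊤⁆) ≤ center (F ⧸ ⁅R, (⊤ : Subgroup F)⁆) := by
  rw [← commutator_top_right_eq_bot_iff_le_center,
    ← map_top_of_surjective _ (QuotientGroup.mk'_surjective _), ← map_commutator,
    QuotientGroup.map_mk'_self]

theorem commutator_le_commutator_ker_top_of_isCyclic {H : Type*} [Group H] [IsCyclic H]
    (f : F →* H) : _root_.commutator F ≤ ⁅f.ker, ⊤⁆ := by
  rw [← Normal.quotient_commutative_iff_commutator_le]
  have hle : ⁅f.ker, ⊤⁆ ≤ f.ker := commutator_le_left _ _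
  refine (QuotientGroup.lift _ f hle).isMulCommutative_of_isCyclic_of_ker_le_center ?_
  rw [QuotientGroup.ker_lift]
  exact map_mk'_le_center_quotient_commutator_top f.ker

end Subgroup

theorem hopfH2_subsingleton_of_isCyclic (G : Type*) [Group G] [IsCyclic G] :
    Subsingleton (hopfH2 G) := by
  have hle : commutator (FreeGroup G) ⊓ presentationKer G ≤ ⁅presentationKer G, ⊤⁆ :=
    inf_le_left.trans (Subgroup.commutator_le_commutator_ker_top_of_isCyclic _)
  unfold hopfH2
  rw [Subgroup.subgroupOf_eq_top.mpr hle]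
  exact QuotientGroup.subsingleton_quotient_top

theorem stmt9_general (n : ℕ) :
    ({x : ℤ | (↑n : ℤ) ∣ x ∧ ∀ k : ℤ, ((n : ℤ) * k + 1) * x = x} = {0}) ∧
      Subsingleton (hopfH2 (Multiplicative (ZMod n))) := by
  refine ⟨Set.eq_singleton_iff_unique_mem.mpr ⟨⟨dvd_zero _, fun _ => mul_zero _⟩, ?_⟩,
    hopfH2_subsingleton_of_isCyclic _⟩
  rintro x ⟨hdvd, hfix⟩
  exact Int.eq_zero_of_dvd_of_forall_mul_add_one_mul_eq hdvd hfix

/-- The only element of `nℤ` fixed by multiplication by `n*k + 1` for all `k : ℤ` is `0`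
(so the limit of the one-object diagram with these maps is the zero group); consequently the
second integral homology of the cyclic group `C_n` of order `n ≥ 1` vanishes. -/
theorem stmt9 (n : ℕ) (hn : 1 ≤ n) :
    ({x : ℤ | (↑n : ℤ) ∣ x ∧ ∀ k : ℤ, ((n : ℤ) * k + 1) * x = x} = {0}) ∧
      Subsingleton (hopfH2 (Multiplicative (ZMod n))) :=
  stmt9_general n
end

section
/- Let F₂ be the free group on generators a, b and p : F₂ ⟶ C_n × C_n the surjection sending a, b to the two standard generators, with kernel R normally generated by aⁿ, bⁿ, and [a,b]. In the quotient Q = F₂/[R,F₂], the image z of [a,b] is central and satisfies zⁿ = 1. -/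
open Subgroup
open scoped commutatorElement

/-
Write `N = ⁅R, F₂⁆`. Every element of `R` becomes central modulo `N`, in particular the image `z`
of `[a,b] ∈ R`. Since `z = ⁅a,b⁆` commutes with `a`, the commutator is multiplicative in its first
argument, so `zⁿ = ⁅aⁿ, b⁆` modulo `N`, which is trivial because `aⁿ ∈ R`.
-/

theorem commutatorElement_pow_left_of_commute {G : Type*} [Group G] {g h : G}
    (hg : Commute g ⁅g, h⁆) (k : ℕ) : ⁅g ^ k, h⁆ = ⁅g, h⁆ ^ k := by
  induction k with
  | zero => simp
  | succ k ih =>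
    rw [pow_succ', commutatorElement_mul_left_eq_conj_mul, ih, (hg.pow_right k).eq,
      mul_inv_cancel_right, pow_succ]

namespace QuotientGroup

variable {G : Type*} [Group G] {N : Subgroup G} [N.Normal]

theorem mk'_commutatorElement_eq_one_of_mem {r : G} (hr : r ∈ N) (g : G) :
    mk' ⁅N, ⊤⁆ ⁅r, g⁆ = 1 :=
  (eq_one_iff _).mpr (commutator_mem_commutator hr (mem_top g))

theorem mk'_mem_center_of_mem {r : G} (hr : r ∈ N) :
    mk' ⁅N, ⊤⁆ r ∈ center (G ⧸ ⁅N, ⊤⁆) := by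
  refine mem_center_iff.mpr fun q => ?_
  obtain ⟨g, rfl⟩ := mk'_surjective _ q
  have h := mk'_commutatorElement_eq_one_of_mem hr g
  rw [map_commutatorElement, commutatorElement_eq_one_iff_commute] at h
  exact h.eq.symm

end QuotientGroup

theorem stmt17_general (n : ℕ)
    (p : FreeGroup (Fin 2) →* Multiplicative (ZMod n) × Multiplicative (ZMod n))
    (hR : Subgroup.normalClosure
        {FreeGroup.of 0 ^ n, FreeGroup.of 1 ^ n, ⁅FreeGroup.of (0 : Fin 2), FreeGroup.of 1⁆}
      = p.ker) :
    ((QuotientGroup.mk' ⁅p.ker, (⊤ : Subgroup (FreeGroup (Fin 2)))⁆)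
        ⁅FreeGroup.of (0 : Fin 2), FreeGroup.of 1⁆ ∈
      Subgroup.center (FreeGroup (Fin 2) ⧸ ⁅p.ker, (⊤ : Subgroup (FreeGroup (Fin 2)))⁆)) ∧
    ((QuotientGroup.mk' ⁅p.ker, (⊤ : Subgroup (FreeGroup (Fin 2)))⁆)
        ⁅FreeGroup.of (0 : Fin 2), FreeGroup.of 1⁆) ^ n = 1 := by
  set π := QuotientGroup.mk' ⁅p.ker, (⊤ : Subgroup (FreeGroup (Fin 2)))⁆
  set a : FreeGroup (Fin 2) := FreeGroup.of 0
  set b : FreeGroup (Fin 2) := FreeGroup.of 1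
  have hab : ⁅a, b⁆ ∈ p.ker := hR ▸ subset_normalClosure (by simp)
  have han : a ^ n ∈ p.ker := hR ▸ subset_normalClosure (by simp)
  have hcenter : π ⁅a, b⁆ ∈ center _ := QuotientGroup.mk'_mem_center_of_mem hab
  refine ⟨hcenter, ?_⟩
  have hcomm : Commute (π a) ⁅π a, π b⁆ := by
    rw [← map_commutatorElement]
    exact mem_center_iff.mp hcenter (π a)
  rw [map_commutatorElement, ← commutatorElement_pow_left_of_commute hcomm, ← map_pow,
    ← map_commutatorElement]
  exact QuotientGroup.mk'_commutatorElement_eq_one_of_mem han b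

/-- Let `p : F₂ ⟶ C_n × C_n` be the surjection from the free group on two generators `a`, `b`
sending them to the standard generators, whose kernel `R` is normally generated by `aⁿ`, `bⁿ`
and `[a,b]`. In the quotient `Q = F₂/[R,F₂]`, the image `z` of `[a,b]` is central and
satisfies `zⁿ = 1`. -/
theorem stmt17 (n : ℕ) (hn : 1 ≤ n)
    (p : FreeGroup (Fin 2) →* Multiplicative (ZMod n) × Multiplicative (ZMod n))
    (hpa : p (FreeGroup.of 0) = (Multiplicative.ofAdd (1 : ZMod n), 1))
    (hpb : p (FreeGroup.of 1) = (1, Multiplicative.ofAdd (1 : ZMod n)))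
    (hps : Function.Surjective p)
    (hR : Subgroup.normalClosure
        {FreeGroup.of 0 ^ n, FreeGroup.of 1 ^ n, ⁅FreeGroup.of (0 : Fin 2), FreeGroup.of 1⁆}
      = p.ker) :
    ((QuotientGroup.mk' ⁅p.ker, (⊤ : Subgroup (FreeGroup (Fin 2)))⁆)
        ⁅FreeGroup.of (0 : Fin 2), FreeGroup.of 1⁆ ∈
      Subgroup.center (FreeGroup (Fin 2) ⧸ ⁅p.ker, (⊤ : Subgroup (FreeGroup (Fin 2)))⁆)) ∧
    ((QuotientGroup.mk' ⁅p.ker, (⊤ : Subgroup (FreeGroup (Fin 2)))⁆)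
        ⁅FreeGroup.of (0 : Fin 2), FreeGroup.of 1⁆) ^ n = 1 :=
  stmt17_general n p hR
end
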